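/- Let b : [0,∞) → ℝ be continuously differentiable with linear growth (there exist M, m > 0 with b(t) ≤ M + m·t for all t ≥ 0), let f, f̃ : [0,∞) → ℝ be continuous integrable functions, and suppose that for a fixed t ≥ 0 and δ > 0 one has f(s) > f̃(s) for all s ∈ [t, t+δ]. Then for every n ∈ ℕ the quantity D_{[t,t+δ]}(n)(c) := ∫_t^{t+δ} e^{-c²s/2 + c·b(s)} sⁿ (f(s) - f̃(s)) ds is strictly positive, and lim_{c→∞} |∫_{t+δ}^∞ e^{-c²s/2 + c·b(s)} sⁿ (f(s) - f̃(s)) ds| / D_{[t,t+δ]}(n)(c) = 0. -/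

import Mathlib

open MeasureTheory Real Filter Set

/-!
On the tail `s ≥ t + δ`, the linear growth of `b` and `sⁿ ≤ e^{ns}` bound the weight
`e^{-c²s/2 + c b(s)} sⁿ` by `exp (c M + (t + δ)(c m + n - c²/2))` once `c²/2 ≥ c m + n`.
On `[t + δ/4, t + δ/2]` the integrand of the denominator is at least a positive multiple of
`exp (-c² (t + δ/2)/2 + c B)`, where `B` is a lower bound of `b` on `[t, t + δ]`. The two
exponents differ by `-δc²/4 + O(c)`, so the ratio decays like a Gaussian in `c`.
-/

lemma tendsto_quadratic_atBot {a : ℝ} (ha : a < 0) (β γ : ℝ) :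
    Tendsto (fun c : ℝ => a * c ^ 2 + β * c + γ) atTop atBot := by
  have hlin : Tendsto (fun c : ℝ => a * c + β) atTop atBot :=
    tendsto_atBot_add_const_right _ β (tendsto_id.const_mul_atTop_of_neg ha)
  refine tendsto_atBot_add_const_right _ γ ((tendsto_id.atTop_mul_atBot₀ hlin).congr fun c => ?_)
  simp only [id]
  ring

lemma tendsto_abs_div_of_exp_bounds {α : Type*} {l : Filter α} {N D E₁ E₂ : α → ℝ} {A κ : ℝ}
    (hκ : 0 < κ) (hN : ∀ᶠ x in l, |N x| ≤ exp (E₁ x) * A)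
    (hD : ∀ᶠ x in l, exp (E₂ x) * κ ≤ D x) (hE : Tendsto (fun x => E₁ x - E₂ x) l atBot) :
    Tendsto (fun x => |N x| / D x) l (nhds 0) := by
  have hlim : Tendsto (fun x => A / κ * exp (E₁ x - E₂ x)) l (nhds 0) := by
    simpa using (tendsto_exp_atBot.comp hE).const_mul (A / κ)
  refine squeeze_zero' ?_ ?_ hlim
  · filter_upwards [hD] with x hx
    exact div_nonneg (abs_nonneg _) ((by positivity : 0 < exp (E₂ x) * κ).le.trans hx)
  · filter_upwards [hN, hD] with x hNx hDx
    calc |N x| / D x ≤ exp (E₁ x) * A / (exp (E₂ x) * κ) :=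
          div_le_div₀ ((abs_nonneg _).trans hNx) hNx (by positivity) hDx
      _ = A / κ * exp (E₁ x - E₂ x) := by
          rw [exp_sub]
          field_simp

lemma abs_setIntegral_mul_le {α : Type*} [MeasurableSpace α] {μ : Measure α} {s : Set α}
    {w h : α → ℝ} {K : ℝ} (hs : MeasurableSet s) (hh : IntegrableOn h s μ)
    (hw : ∀ x ∈ s, |w x| ≤ K) :
    |∫ x in s, w x * h x ∂μ| ≤ K * ∫ x in s, |h x| ∂μ :=
  calc |∫ x in s, w x * h x ∂μ| ≤ ∫ x in s, |w x * h x| ∂μ := abs_integral_le_integral_abs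
    _ ≤ ∫ x in s, K * |h x| ∂μ := by
        refine integral_mono_of_nonneg (ae_of_all _ fun x => abs_nonneg _)
          (hh.abs.const_mul K) ?_
        filter_upwards [ae_restrict_mem hs] with x hx
        rw [abs_mul]
        exact mul_le_mul_of_nonneg_right (hw x hx) (abs_nonneg _)
    _ = K * ∫ x in s, |h x| ∂μ := integral_const_mul K _

lemma mul_sub_le_setIntegral_of_le_on_Icc {F : ℝ → ℝ} {J : Set ℝ} {a a' κ : ℝ} (haa' : a ≤ a')
    (hsub : Icc a a' ⊆ J) (hJ : MeasurableSet J) (hF : IntegrableOn F J)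
    (hF0 : ∀ s ∈ J, 0 ≤ F s) (hκ : ∀ s ∈ Icc a a', κ ≤ F s) :
    κ * (a' - a) ≤ ∫ s in J, F s :=
  calc κ * (a' - a) ≤ ∫ s in Icc a a', F s := by
        simpa [volume_real_Icc_of_le haa'] using
          setIntegral_ge_of_const_le_real measurableSet_Icc (by simp) hκ (hF.mono_set hsub)
    _ ≤ ∫ s in J, F s :=
        setIntegral_mono_set hF (ae_restrict_of_forall_mem hJ hF0) hsub.eventuallyLE

lemma setIntegral_Icc_pos_of_pos_on_Ioo {F : ℝ → ℝ} {a a' : ℝ} (haa' : a < a')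
    (hF : ContinuousOn F (Icc a a')) (hpos : ∀ s ∈ Ioo a a', 0 < F s) :
    0 < ∫ s in Icc a a', F s := by
  rw [integral_Icc_eq_integral_Ioc, ← intervalIntegral.integral_of_le haa'.le]
  refine intervalIntegral.intervalIntegral_pos_of_pos_on ?_ hpos haa'
  exact (hF.mono (uIcc_of_le haa'.le).subset).intervalIntegrable

lemma pow_le_exp_nat_mul {s : ℝ} (hs : 0 ≤ s) (n : ℕ) : s ^ n ≤ exp (n * s) :=
  calc s ^ n ≤ exp s ^ n := pow_le_pow_left₀ hs (by linarith [add_one_le_exp s]) n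
    _ = exp (n * s) := (exp_nat_mul s n).symm

lemma exp_mul_pow_le_of_le_linear {β M m c T s : ℝ} (n : ℕ) (hβ : β ≤ M + m * s) (hc : 0 ≤ c)
    (hcn : c * m + n ≤ c ^ 2 / 2) (hTs : T ≤ s) (hs : 0 ≤ s) :
    exp (-c ^ 2 * s / 2 + c * β) * s ^ n ≤ exp (c * M + T * (c * m + n - c ^ 2 / 2)) :=
  calc exp (-c ^ 2 * s / 2 + c * β) * s ^ n
      ≤ exp (-c ^ 2 * s / 2 + c * (M + m * s)) * exp (n * s) := by
        gcongr
        exact pow_le_exp_nat_mul hs n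
    _ = exp (c * M + s * (c * m + n - c ^ 2 / 2)) := by
        rw [← exp_add]
        ring_nf
    _ ≤ exp (c * M + T * (c * m + n - c ^ 2 / 2)) := by
        gcongr exp (_ + ?_)
        exact mul_le_mul_of_nonpos_right hTs (by linarith)

lemma eventually_abs_setIntegral_Ici_le {b h : ℝ → ℝ} {M m T : ℝ} (n : ℕ) (hT : 0 ≤ T)
    (hgrowth : ∀ s ≥ T, b s ≤ M + m * s) (hh : IntegrableOn h (Ici T)) :
    ∀ᶠ c in atTop, |∫ s in Ici T, exp (-c ^ 2 * s / 2 + c * b s) * (s ^ n * h s)| ≤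
      exp (c * M + T * (c * m + n - c ^ 2 / 2)) * ∫ s in Ici T, |h s| := by
  have hcn := (tendsto_quadratic_atBot (by norm_num : (-1 / 2 : ℝ) < 0) m n).eventually
    (eventually_le_atBot 0)
  filter_upwards [hcn, eventually_ge_atTop 0] with c hcn hc
  simp only [← mul_assoc]
  refine abs_setIntegral_mul_le measurableSet_Ici hh fun s (hs : T ≤ s) => ?_
  rw [abs_of_nonneg (mul_nonneg (exp_pos _).le (pow_nonneg (hT.trans hs) n))]
  exact exp_mul_pow_le_of_le_linear n (hgrowth s hs) hc (by linarith) hs (hT.trans hs)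

lemma exp_mul_mul_sub_le_setIntegral {b p : ℝ → ℝ} {J : Set ℝ} {a a' c B ε : ℝ} (haa' : a ≤ a')
    (hsub : Icc a a' ⊆ J) (hJ : MeasurableSet J)
    (hint : IntegrableOn (fun s => exp (-c ^ 2 * s / 2 + c * b s) * p s) J)
    (hp : ∀ s ∈ J, 0 ≤ p s) (hc : 0 ≤ c) (hB : ∀ s ∈ Icc a a', B ≤ b s)
    (hε0 : 0 ≤ ε) (hε : ∀ s ∈ Icc a a', ε ≤ p s) :
    exp (-c ^ 2 * a' / 2 + c * B) * ε * (a' - a) ≤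
      ∫ s in J, exp (-c ^ 2 * s / 2 + c * b s) * p s := by
  refine mul_sub_le_setIntegral_of_le_on_Icc haa' hsub hJ hint
    (fun s hs => mul_nonneg (exp_pos _).le (hp s hs)) fun s hs => ?_
  have hexp : -c ^ 2 * a' / 2 + c * B ≤ -c ^ 2 * s / 2 + c * b s := by
    nlinarith [mul_le_mul_of_nonneg_left hs.2 (sq_nonneg c), mul_le_mul_of_nonneg_left (hB s hs) hc]
  exact mul_le_mul (exp_le_exp.mpr hexp) (hε s hs) hε0 (exp_pos _).le

lemma exists_exp_mul_le_setIntegral_Icc {b p : ℝ → ℝ} {a δ : ℝ} (hδ : 0 < δ)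
    (hb : ContinuousOn b (Icc a (a + δ))) (hp : ContinuousOn p (Icc a (a + δ)))
    (hp0 : ∀ s ∈ Icc a (a + δ), 0 ≤ p s) (hpos : ∀ s ∈ Ioc a (a + δ), 0 < p s) :
    ∃ B κ, 0 < κ ∧ ∀ c, 0 ≤ c → exp (-c ^ 2 * (a + δ / 2) / 2 + c * B) * κ ≤
      ∫ s in Icc a (a + δ), exp (-c ^ 2 * s / 2 + c * b s) * p s := by
  -- away from `a`, where `p` may vanish, and from `a + δ`, to keep a Gaussian gap to the tail
  have hsub : Icc (a + δ / 4) (a + δ / 2) ⊆ Icc a (a + δ) :=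
    Icc_subset_Icc (by linarith) (by linarith)
  obtain ⟨B, hB⟩ := isCompact_Icc.bddBelow_image hb
  obtain ⟨ε, hε, hεle⟩ := isCompact_Icc.exists_forall_le' (hp.mono hsub)
    fun s hs => hpos s ⟨by linarith [hs.1], (hsub hs).2⟩
  refine ⟨B, ε * (δ / 4), by positivity, fun c hc => ?_⟩
  have hint : ContinuousOn (fun s => exp (-c ^ 2 * s / 2 + c * b s) * p s) (Icc a (a + δ)) := by
    fun_prop (disch := norm_num)
  have hlow := exp_mul_mul_sub_le_setIntegral (by linarith) hsub measurableSet_Icc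
    hint.integrableOn_Icc hp0 hc (fun s hs => hB (mem_image_of_mem b (hsub hs))) hε.le hεle
  convert hlow using 1
  ring

theorem tail_difference_ratio_tendsto_zero_general (b f ftil : ℝ → ℝ) (M m t δ : ℝ) (n : ℕ)
    (hb : ContDiffOn ℝ 1 b (Ici 0))
    (hgrowth : ∀ s ≥ (0 : ℝ), b s ≤ M + m * s)
    (hfc : ContinuousOn f (Ici 0)) (hfint : IntegrableOn f (Ici 0))
    (hftc : ContinuousOn ftil (Ici 0)) (hftint : IntegrableOn ftil (Ici 0))
    (ht : 0 ≤ t) (hδ : 0 < δ)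
    (hgt : ∀ s ∈ Icc t (t + δ), ftil s < f s) :
    (∀ c : ℝ, 0 < ∫ s in Icc t (t + δ),
        Real.exp (-c ^ 2 * s / 2 + c * b s) * s ^ n * (f s - ftil s)) ∧
    Tendsto (fun c =>
        |∫ s in Ici (t + δ), Real.exp (-c ^ 2 * s / 2 + c * b s) * s ^ n * (f s - ftil s)| /
        (∫ s in Icc t (t + δ),
          Real.exp (-c ^ 2 * s / 2 + c * b s) * s ^ n * (f s - ftil s)))
      atTop (nhds 0) := by
  have hIcc : Icc t (t + δ) ⊆ Ici 0 := fun s hs => ht.trans hs.1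
  have hbc := hb.continuousOn.mono hIcc
  have hfc' := hfc.mono hIcc
  have hftc' := hftc.mono hIcc
  have hp0 : ∀ s ∈ Icc t (t + δ), 0 ≤ s ^ n * (f s - ftil s) := fun s hs =>
    mul_nonneg (pow_nonneg (ht.trans hs.1) n) (sub_nonneg.mpr (hgt s hs).le)
  have hpos : ∀ s ∈ Ioc t (t + δ), 0 < s ^ n * (f s - ftil s) := fun s hs =>
    mul_pos (pow_pos (ht.trans_lt hs.1) n) (sub_pos.mpr (hgt s (Ioc_subset_Icc_self hs)))
  simp only [mul_assoc]
  refine ⟨fun c => setIntegral_Icc_pos_of_pos_on_Ioo (by linarith) (by fun_prop (disch := norm_num))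
    fun s hs => mul_pos (exp_pos _) (hpos s (Ioo_subset_Ioc_self hs)), ?_⟩
  obtain ⟨B, κ, hκ, hlow⟩ := exists_exp_mul_le_setIntegral_Icc hδ hbc (by fun_prop) hp0 hpos
  refine tendsto_abs_div_of_exp_bounds hκ (eventually_abs_setIntegral_Ici_le n (by linarith)
    (fun s hs => hgrowth s (by linarith))
    ((hfint.sub hftint).mono_set (Ici_subset_Ici.mpr (by linarith))))
    ((eventually_ge_atTop 0).mono hlow) ?_
  exact (tendsto_quadratic_atBot (by linarith : -(δ / 4) < 0) (M + m * (t + δ) - B)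
    (n * (t + δ))).congr fun c => by ring

/-- If `f > f̃` on `[t, t+δ]`, then `D_{[t,t+δ]}(n)(c)` is strictly positive and
`|D_{[t+δ,∞)}(n)(c)| / D_{[t,t+δ]}(n)(c) → 0` as `c → ∞`. -/
theorem tail_difference_ratio_tendsto_zero (b f ftil : ℝ → ℝ) (M m t δ : ℝ) (n : ℕ)
    (hb : ContDiffOn ℝ 1 b (Ici 0))
    (hM : 0 < M) (hm : 0 < m) (hgrowth : ∀ s ≥ (0 : ℝ), b s ≤ M + m * s)
    (hfc : ContinuousOn f (Ici 0)) (hfint : IntegrableOn f (Ici 0))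
    (hftc : ContinuousOn ftil (Ici 0)) (hftint : IntegrableOn ftil (Ici 0))
    (ht : 0 ≤ t) (hδ : 0 < δ)
    (hgt : ∀ s ∈ Icc t (t + δ), ftil s < f s) :
    (∀ c : ℝ, 0 < ∫ s in Icc t (t + δ),
        Real.exp (-c ^ 2 * s / 2 + c * b s) * s ^ n * (f s - ftil s)) ∧
    Tendsto (fun c =>
        |∫ s in Ici (t + δ), Real.exp (-c ^ 2 * s / 2 + c * b s) * s ^ n * (f s - ftil s)| /
        (∫ s in Icc t (t + δ),
          Real.exp (-c ^ 2 * s / 2 + c * b s) * s ^ n * (f s - ftil s)))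
      atTop (nhds 0) :=
  tail_difference_ratio_tendsto_zero_general b f ftil M m t δ n hb hgrowth hfc hfint hftc hftint ht
    hδ hgt
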